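/- arXiv:1804.02091 — 3 statements merged into one kernel-verified Lean document; each statement's English description precedes it below -/
import Mathlib

section
/- With P_{n-1} the (n-1)×(n-1) matrix arising in the cofactor expansion of det(z - E_{[0,n-1]}) along the first column (explicitly given in terms of α_1,...,α_{n-1} and ρ_0,...,ρ_{n-1}), and P'_{n-1} the corresponding matrix with all α_j replaced by -α_j, one has det P_{n-1} = -det P'_{n-1}. -/
open Polynomial Matrix Complex
open scoped ComplexConjugate

noncomputable section

/-- `ρ_n = sqrt(1 - |α_n|²)`. -/
def rhoC (α : ℤ → ℂ) (n : ℤ) : ℝ := Real.sqrt (1 - ‖α n‖ ^ 2)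

/-- Entry `(i,k)` of the extended CMV matrix with Verblunsky coefficients `α`. -/
def cmvEntry (α : ℤ → ℂ) (i k : ℤ) : ℂ :=
  if i % 2 = 0 then
    if k = i - 1 then conj (α i) * rhoC α (i - 1)
    else if k = i then -conj (α i) * α (i - 1)
    else if k = i + 1 then conj (α (i + 1)) * rhoC α i
    else if k = i + 2 then (rhoC α (i + 1) : ℂ) * rhoC α i
    else 0
  else
    if k = i - 2 then (rhoC α (i - 1) : ℂ) * rhoC α (i - 2)
    else if k = i - 1 then -(rhoC α (i - 1) : ℂ) * α (i - 2)
    else if k = i then -conj (α i) * α (i - 1)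
    else if k = i + 1 then -α (i - 1) * rhoC α i
    else 0

/-- The restriction of the extended CMV matrix to the window `[a, a+m-1]`. -/
def cmvWindow (α : ℤ → ℂ) (a : ℤ) (m : ℕ) : Matrix (Fin m) (Fin m) ℂ :=
  Matrix.of fun i j => cmvEntry α (a + (i : ℕ)) (a + (j : ℕ))

/-- Extension of half-line Verblunsky coefficients, using the convention `α_{-1} = -1`,
under which the half-line CMV matrix is the restriction of the extended one to `[0,∞)`. -/
def halfAlpha (α : ℕ → ℂ) : ℤ → ℂ := fun n => if n < 0 then -1 else α n.toNat

/-- `det(z - X_{[a,a+m-1]})` as a polynomial in `z`, for `X` the extended CMV matrix of `α`. -/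
def windowPoly (α : ℤ → ℂ) (a : ℤ) (m : ℕ) : Polynomial ℂ :=
  ((Polynomial.X : Polynomial ℂ) • (1 : Matrix (Fin m) (Fin m) (Polynomial ℂ)) -
    (cmvWindow α a m).map Polynomial.C).det

/-- `det(z - X_{[a,a+m-1]})` evaluated at a point `z`. -/
def windowDet (α : ℤ → ℂ) (z : ℂ) (a : ℤ) (m : ℕ) : ℂ := (windowPoly α a m).eval z

/-- Reversed polynomial at degree `n`: coefficients are conjugated and reversed
within indices `0, …, n`, so `(revPoly n Q)(z) = zⁿ conj(Q(1/conj z))`. -/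
def revPoly (n : ℕ) (Q : Polynomial ℂ) : Polynomial ℂ :=
  ∑ k ∈ Finset.range (n + 1), Polynomial.C (conj (Q.coeff (n - k))) * Polynomial.X ^ k

/-- The monic orthogonal polynomials `Φ_n` defined by the Szegő recursion
`Φ_{k+1}(z) = z Φ_k(z) - conj(α_k) Φ_k*(z)`, `Φ_0 = 1`. -/
def monicOPUC (α : ℕ → ℂ) : ℕ → Polynomial ℂ
  | 0 => 1
  | n + 1 => Polynomial.X * monicOPUC α n -
      Polynomial.C (conj (α n)) * revPoly n (monicOPUC α n)

/-- The Szegő cocycle matrix `S^z_α = (1/ρ)[[z, -conj α],[-αz, 1]]`. -/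
def szego (z α : ℂ) : Matrix (Fin 2) (Fin 2) ℂ :=
  ((Real.sqrt (1 - ‖α‖ ^ 2) : ℂ))⁻¹ • !![z, -conj α; -α * z, 1]

/-- The `n`-step Szegő transfer matrix `S^z_n = S^z_{α_{n-1}} ⋯ S^z_{α_0}`. -/
def szegoTransfer (α : ℕ → ℂ) (z : ℂ) : ℕ → Matrix (Fin 2) (Fin 2) ℂ
  | 0 => 1
  | n + 1 => szego z (α n) * szegoTransfer α z n

/-- The matrix `P_m` appearing in the cofactor expansion of `det(z - E_{[0,m]})`
along the first column: the minor of `z - E_{[0,m]}` deleting row `1` and column `0`. -/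
def Pmat (α : ℤ → ℂ) (z : ℂ) (m : ℕ) : Matrix (Fin m) (Fin m) ℂ :=
  (z • (1 : Matrix (Fin (m + 1)) (Fin (m + 1)) ℂ) - cmvWindow α 0 (m + 1)).submatrix
    (Fin.succAbove 1) (Fin.succAbove 0)

/-!
Replacing `α` by `-α` conjugates the extended CMV matrix `E` by the sign matrix
`D = diag((-1)ⁱ)`, and hence also `z - E`. Since `P` is the minor of `z - E_{[0,m]}` obtained by
deleting row `1` and column `0`, the minor of `D (z - E) D` differs from it by the factor
`(-1)¹ (-1)⁰ = -1`.
-/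

lemma rhoC_neg (α : ℤ → ℂ) : rhoC (fun j => -α j) = rhoC α := by
  funext n
  simp [rhoC]

lemma cmvEntry_neg (α : ℤ → ℂ) (i k : ℤ) :
    cmvEntry (fun j => -α j) i k = ((i.negOnePow * k.negOnePow : ℤˣ) : ℂ) * cmvEntry α i k := by
  rw [mul_comm i.negOnePow, ← Int.negOnePow_sub]
  unfold cmvEntry
  rw [rhoC_neg]
  split_ifs <;> subst_vars <;> simp

def windowSign (a : ℤ) (m : ℕ) (i : Fin m) : ℂ := ((a + (i : ℕ)).negOnePow : ℂ)

lemma windowSign_mul_self (a : ℤ) (m : ℕ) (i : Fin m) :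
    windowSign a m i * windowSign a m i = 1 := by
  rw [windowSign, ← Int.cast_mul, ← Units.val_mul, Int.units_mul_self, Units.val_one, Int.cast_one]

lemma cmvWindow_neg (α : ℤ → ℂ) (a : ℤ) (m : ℕ) :
    cmvWindow (fun j => -α j) a m =
      diagonal (windowSign a m) * cmvWindow α a m * diagonal (windowSign a m) := by
  ext i j
  simp [cmvWindow, windowSign, cmvEntry_neg]
  ring

lemma smul_one_sub_cmvWindow_neg (α : ℤ → ℂ) (a : ℤ) (m : ℕ) (z : ℂ) :
    z • 1 - cmvWindow (fun j => -α j) a m =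
      diagonal (windowSign a m) * (z • 1 - cmvWindow α a m) * diagonal (windowSign a m) := by
  rw [cmvWindow_neg, mul_sub, sub_mul, mul_smul_comm, smul_mul_assoc, mul_one,
    diagonal_mul_diagonal]
  simp only [windowSign_mul_self, diagonal_one]

section SignConjugation

variable {R : Type*} [CommRing R] {m : ℕ} (s : Fin (m + 1) → R)

lemma prod_succAbove_of_mul_self_eq_one (hs : ∀ k, s k * s k = 1) (i : Fin (m + 1)) :
    ∏ k, s (i.succAbove k) = s i * ∏ k, s k := by
  rw [Fin.prod_univ_succAbove s i, ← mul_assoc, hs, one_mul]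

lemma det_submatrix_succAbove_diagonal_mul_mul_diagonal (hs : ∀ k, s k * s k = 1)
    (M : Matrix (Fin (m + 1)) (Fin (m + 1)) R) (i j : Fin (m + 1)) :
    ((diagonal s * M * diagonal s).submatrix i.succAbove j.succAbove).det =
      s i * s j * (M.submatrix i.succAbove j.succAbove).det := by
  have hsub : (diagonal s * M * diagonal s).submatrix i.succAbove j.succAbove =
      diagonal (s ∘ i.succAbove) * M.submatrix i.succAbove j.succAbove *
        diagonal (s ∘ j.succAbove) := by
    ext; simp
  have hsq : (∏ k, s k) * ∏ k, s k = 1 := by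
    rw [← Finset.prod_mul_distrib, Finset.prod_eq_one fun k _ => hs k]
  rw [hsub, det_mul, det_mul, det_diagonal, det_diagonal, Function.comp_def, Function.comp_def,
    prod_succAbove_of_mul_self_eq_one s hs, prod_succAbove_of_mul_self_eq_one s hs]
  linear_combination (s i * s j * (M.submatrix i.succAbove j.succAbove).det) * hsq

end SignConjugation

theorem Pmat_det_sign_flip_general (α : ℤ → ℂ)
    (m : ℕ) (hm : 1 ≤ m) (z : ℂ) :
    (Pmat α z m).det = -(Pmat (fun k => -α k) z m).det := by
  obtain ⟨n, rfl⟩ : ∃ n, m = n + 1 := ⟨m - 1, by omega⟩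
  have hsign : windowSign 0 (n + 2) 1 * windowSign 0 (n + 2) 0 = -1 := by simp [windowSign]
  rw [Pmat, Pmat, smul_one_sub_cmvWindow_neg,
    det_submatrix_succAbove_diagonal_mul_mul_diagonal _ (windowSign_mul_self 0 (n + 2)), hsign]
  ring

theorem Pmat_det_sign_flip (α : ℤ → ℂ) (hα : ∀ k, ‖α k‖ < 1)
    (m : ℕ) (hm : 1 ≤ m) (z : ℂ) :
    (Pmat α z m).det = -(Pmat (fun k => -α k) z m).det :=
  Pmat_det_sign_flip_general α m hm z
end
end

section
/- The sum of the monic orthogonal polynomial and the second kind polynomial satisfies Φ_n(z) + Ψ_n(z) = 2z · det(z·I - E_{[1,n-1]}), where E_{[1,n-1]} is the restriction of the extended CMV matrix to indices 1,...,n-1. -/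
open Polynomial Matrix Complex
open scoped ComplexConjugate

noncomputable section

/-!
Write `A_s = det(z - E_{[1,s]})`. The coefficient `α_{s+1}` enters `z - E_{[1,s+1]}` only
through its last column (`s` even) or last row (`s` odd), and that line is
`z e_{s+1} + conj α_{s+1} v` with `v` supported on the last two indices. Hence
`A_{s+1} = z A_s + conj α_{s+1} B_s`, where `B_s` is the determinant with that line replaced by
`v`. Expanding `B_{s+1}` along its two-entry line gives `B_{s+1} = α_{s+1} A_{s+1} + ρ_{s+1}² B_s`,
i.e. `B_{s+1} = B_s + α_{s+1} z A_s`. The Szegő recursion makes `(Φ_n + Ψ_n, Φ_n^* - Ψ_n^*)` obey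
the same linear recursion, so `Φ_{m+1} + Ψ_{m+1} = 2z A_m` and `Φ_{m+1}^* - Ψ_{m+1}^* = -2z B_m`.
-/

namespace Matrix

variable {R : Type*} [CommRing R] {n : ℕ}

theorem det_eq_of_lastRow_eq (M : Matrix (Fin (n + 1)) (Fin (n + 1)) R) (z c : R)
    (v : Fin (n + 1) → R) (h : M (Fin.last n) = z • Pi.single (Fin.last n) 1 + c • v) :
    M.det = z * (M.submatrix Fin.castSucc Fin.castSucc).det +
      c * (M.updateRow (Fin.last n) v).det := by
  conv_lhs => rw [← M.updateRow_eq_self (Fin.last n), h]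
  rw [det_updateRow_add, det_updateRow_smul, det_updateRow_smul, ← adjugate_apply,
    adjugate_fin_succ_eq_det_submatrix, Fin.succAbove_last, ← two_mul, pow_mul]
  simp

theorem det_eq_of_lastCol_eq (M : Matrix (Fin (n + 1)) (Fin (n + 1)) R) (z c : R)
    (v : Fin (n + 1) → R)
    (h : (fun i => M i (Fin.last n)) = z • Pi.single (Fin.last n) 1 + c • v) :
    M.det = z * (M.submatrix Fin.castSucc Fin.castSucc).det +
      c * (M.updateCol (Fin.last n) v).det := by
  rw [← det_transpose, det_eq_of_lastRow_eq Mᵀ z c v h, ← transpose_submatrix, det_transpose,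
    updateRow_transpose, det_transpose]

theorem det_eq_of_lastRow_two_entries (M : Matrix (Fin (n + 2)) (Fin (n + 2)) R)
    (h : ∀ j : Fin n, M (Fin.last (n + 1)) j.castSucc.castSucc = 0) :
    M.det = M (Fin.last (n + 1)) (Fin.last (n + 1)) * (M.submatrix Fin.castSucc Fin.castSucc).det -
      M (Fin.last (n + 1)) (Fin.last n).castSucc *
        (M.submatrix Fin.castSucc (Fin.last n).castSucc.succAbove).det := by
  rw [det_succ_row M (Fin.last (n + 1)), Fin.sum_univ_castSucc, Fin.sum_univ_castSucc,
    Finset.sum_eq_zero fun j _ => by rw [h j, mul_zero, zero_mul], Fin.succAbove_last]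
  simp [Even.neg_one_pow (⟨n + 1, rfl⟩ : Even (n + 1 + (n + 1))),
    Odd.neg_one_pow (⟨n, by ring⟩ : Odd (n + 1 + n))]
  ring

theorem det_eq_of_lastCol_two_entries (M : Matrix (Fin (n + 2)) (Fin (n + 2)) R)
    (h : ∀ i : Fin n, M i.castSucc.castSucc (Fin.last (n + 1)) = 0) :
    M.det = M (Fin.last (n + 1)) (Fin.last (n + 1)) * (M.submatrix Fin.castSucc Fin.castSucc).det -
      M (Fin.last n).castSucc (Fin.last (n + 1)) *
        (M.submatrix (Fin.last n).castSucc.succAbove Fin.castSucc).det := by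
  rw [← det_transpose, det_eq_of_lastRow_two_entries Mᵀ h, ← transpose_submatrix,
    ← transpose_submatrix, det_transpose, det_transpose]
  rfl

end Matrix

open Matrix

section revPoly

variable (n : ℕ) (P Q : ℂ[X])

theorem coeff_revPoly (k : ℕ) :
    (revPoly n Q).coeff k = if k ≤ n then conj (Q.coeff (n - k)) else 0 := by
  simp [revPoly, coeff_X_pow]

theorem natDegree_revPoly_le : (revPoly n Q).natDegree ≤ n :=
  natDegree_le_iff_coeff_eq_zero.2 fun k hk => by simp [coeff_revPoly, hk.not_ge]

theorem revPoly_sub : revPoly n (P - Q) = revPoly n P - revPoly n Q := by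
  ext k
  simp only [coeff_revPoly, coeff_sub, map_sub]
  split_ifs <;> simp

theorem revPoly_C_mul (c : ℂ) : revPoly n (C c * P) = C (conj c) * revPoly n P := by
  ext k
  simp only [coeff_revPoly, coeff_C_mul, map_mul]
  split_ifs <;> simp

theorem revPoly_succ_X_mul : revPoly (n + 1) (X * P) = revPoly n P := by
  ext k
  simp only [coeff_revPoly]
  split_ifs
  · rw [show n + 1 - k = n - k + 1 by omega, coeff_X_mul]
  · rw [show n + 1 - k = 0 by omega, mul_coeff_zero, coeff_X_zero, zero_mul, map_zero]
  · omega
  · rfl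

theorem revPoly_succ_of_natDegree_le (h : P.natDegree ≤ n) :
    revPoly (n + 1) P = X * revPoly n P := by
  ext k
  rcases k with _ | k
  · simp [coeff_revPoly, coeff_eq_zero_of_natDegree_lt (Nat.lt_succ_of_le h)]
  · simp only [coeff_revPoly, coeff_X_mul]
    split_ifs <;> first | omega | simp

theorem revPoly_revPoly (h : Q.natDegree ≤ n) : revPoly n (revPoly n Q) = Q := by
  ext k
  simp only [coeff_revPoly]
  split_ifs with hk
  · rw [Nat.sub_sub_self hk, conj_conj]
  · omega
  · exact (coeff_eq_zero_of_natDegree_lt (h.trans_lt (not_le.1 hk))).symm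

end revPoly

section monicOPUC

variable (β : ℕ → ℂ) (z : ℂ)

theorem natDegree_monicOPUC_le (n : ℕ) : (monicOPUC β n).natDegree ≤ n := by
  induction n with
  | zero => simp [monicOPUC]
  | succ n ih =>
    rw [monicOPUC]
    refine (natDegree_sub_le _ _).trans (max_le ?_ ?_)
    · exact natDegree_mul_le.trans (by rw [natDegree_X]; omega)
    · exact (natDegree_C_mul_le _ _).trans ((natDegree_revPoly_le _ _).trans n.le_succ)

theorem revPoly_monicOPUC_succ (n : ℕ) :
    revPoly (n + 1) (monicOPUC β (n + 1)) =
      revPoly n (monicOPUC β n) - C (β n) * X * monicOPUC β n := by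
  rw [monicOPUC, revPoly_sub, revPoly_succ_X_mul, revPoly_C_mul, conj_conj,
    revPoly_succ_of_natDegree_le _ _ (natDegree_revPoly_le _ _),
    revPoly_revPoly _ _ (natDegree_monicOPUC_le β n), mul_assoc]

theorem eval_monicOPUC_succ (n : ℕ) :
    (monicOPUC β (n + 1)).eval z =
      z * (monicOPUC β n).eval z - conj (β n) * (revPoly n (monicOPUC β n)).eval z := by
  simp [monicOPUC]

theorem eval_revPoly_monicOPUC_succ (n : ℕ) :
    (revPoly (n + 1) (monicOPUC β (n + 1))).eval z =
      (revPoly n (monicOPUC β n)).eval z - β n * z * (monicOPUC β n).eval z := by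
  simp [revPoly_monicOPUC_succ]

theorem eval_monicOPUC_add_neg (A B : ℕ → ℂ) (hA₀ : A 0 = 1) (hB₀ : B 0 = β 0)
    (hA : ∀ s, A (s + 1) = z * A s + conj (β (s + 1)) * B s)
    (hB : ∀ s, B (s + 1) = B s + β (s + 1) * z * A s) (m : ℕ) :
    (monicOPUC β (m + 1)).eval z + (monicOPUC (fun k => -β k) (m + 1)).eval z = 2 * z * A m ∧
      (revPoly (m + 1) (monicOPUC β (m + 1))).eval z -
        (revPoly (m + 1) (monicOPUC (fun k => -β k) (m + 1))).eval z = -(2 * z * B m) := by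
  induction m with
  | zero =>
    have hΦ₀ (γ : ℕ → ℂ) : (monicOPUC γ 0).eval z = 1 := by simp [monicOPUC]
    have hΦ₀rev (γ : ℕ → ℂ) : (revPoly 0 (monicOPUC γ 0)).eval z = 1 := by simp [monicOPUC, revPoly]
    simp only [eval_monicOPUC_succ, eval_revPoly_monicOPUC_succ, hΦ₀, hΦ₀rev, hA₀, hB₀, map_neg]
    constructor <;> ring
  | succ m ih =>
    obtain ⟨ih₁, ih₂⟩ := ih
    simp only [eval_monicOPUC_succ _ _ (m + 1), eval_revPoly_monicOPUC_succ _ _ (m + 1), hA, hB,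
      map_neg]
    constructor
    · linear_combination z * ih₁ - conj (β (m + 1)) * ih₂
    · linear_combination ih₂ - β (m + 1) * z * ih₁

end monicOPUC

def borderEntry (α : ℤ → ℂ) (k i : ℤ) : ℂ :=
  if i = k then α (k - 1) else if i = k - 1 then -(rhoC α (k - 1) : ℂ) else 0

theorem cmvEntry_col_odd (α : ℤ → ℂ) {i k : ℤ} (hk : k % 2 = 1) (hi : i ≤ k) :
    cmvEntry α i k = -conj (α k) * borderEntry α k i := by
  unfold cmvEntry borderEntry
  split_ifs <;> first | omega | (subst_vars; ring_nf)

theorem cmvEntry_row_even (α : ℤ → ℂ) {j k : ℤ} (hk : k % 2 = 0) (hj : j ≤ k) :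
    cmvEntry α k j = -conj (α k) * borderEntry α k j := by
  unfold cmvEntry borderEntry
  split_ifs <;> first | omega | (subst_vars; ring_nf)

theorem cmvEntry_col_even (α : ℤ → ℂ) {i k : ℤ} (hk : k % 2 = 0) (hi : i < k) :
    cmvEntry α i k = -(rhoC α (k - 1) : ℂ) * borderEntry α (k - 1) i := by
  unfold cmvEntry borderEntry
  split_ifs <;> first | omega | (subst_vars; ring_nf)

theorem cmvEntry_row_odd (α : ℤ → ℂ) {j k : ℤ} (hk : k % 2 = 1) (hj : j < k) :
    cmvEntry α k j = -(rhoC α (k - 1) : ℂ) * borderEntry α (k - 1) j := by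
  unfold cmvEntry borderEntry
  split_ifs <;> first | omega | (subst_vars; ring_nf)

theorem rhoC_sq (α : ℤ → ℂ) {k : ℤ} (hk : ‖α k‖ ≤ 1) :
    (rhoC α k : ℂ) ^ 2 = 1 - conj (α k) * α k := by
  rw [← ofReal_pow, rhoC, Real.sq_sqrt (by nlinarith [norm_nonneg (α k)]), mul_comm, mul_conj,
    normSq_eq_norm_sq]
  push_cast
  ring

def windowCharMat (α : ℤ → ℂ) (z : ℂ) (s : ℕ) : Matrix (Fin s) (Fin s) ℂ :=
  z • 1 - cmvWindow α 1 s

def borderVec (α : ℤ → ℂ) (s : ℕ) : Fin s → ℂ :=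
  fun q => borderEntry α s (1 + (q : ℕ))

theorem windowPoly_eq_charpoly (α : ℤ → ℂ) (a : ℤ) (m : ℕ) :
    windowPoly α a m = (cmvWindow α a m).charpoly := by
  rw [windowPoly, charpoly, charmatrix, smul_one_eq_diagonal]
  rfl

theorem windowDet_one_eq_det (α : ℤ → ℂ) (z : ℂ) (s : ℕ) :
    windowDet α z 1 s = (windowCharMat α z s).det := by
  rw [windowDet, windowPoly_eq_charpoly, eval_charpoly, windowCharMat, smul_one_eq_diagonal]
  rfl

section window

variable (α : ℤ → ℂ) (z : ℂ) {s : ℕ}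

theorem windowCharMat_apply (i j : Fin s) :
    windowCharMat α z s i j =
      (if i = j then z else 0) - cmvEntry α (1 + (i : ℕ)) (1 + (j : ℕ)) := by
  simp [windowCharMat, cmvWindow, one_apply]

theorem windowCharMat_castSucc_castSucc (i j : Fin s) :
    windowCharMat α z (s + 1) i.castSucc j.castSucc = windowCharMat α z s i j := by
  simp [windowCharMat_apply]

theorem windowCharMat_submatrix_castSucc :
    (windowCharMat α z (s + 1)).submatrix Fin.castSucc Fin.castSucc = windowCharMat α z s := by
  ext i j
  exact windowCharMat_castSucc_castSucc α z i j

theorem borderVec_last : borderVec α (s + 1) (Fin.last s) = α s := by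
  simp [borderVec, borderEntry, add_comm]

theorem borderVec_castSucc_last :
    borderVec α (s + 2) (Fin.last s).castSucc = -(rhoC α (s + 1 : ℕ) : ℂ) := by
  simp only [borderVec, borderEntry, Fin.val_castSucc, Fin.val_last]
  split_ifs <;> first | omega | (push_cast; ring_nf)

theorem borderVec_castSucc_castSucc (j : Fin s) : borderVec α (s + 2) j.castSucc.castSucc = 0 := by
  simp only [borderVec, borderEntry, Fin.val_castSucc]
  split_ifs <;> first | omega | rfl

theorem windowCharMat_lastCol (hs : Even s) :
    (fun i => windowCharMat α z (s + 1) i (Fin.last s)) =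
      z • Pi.single (Fin.last s) 1 + conj (α (s + 1 : ℕ)) • borderVec α (s + 1) := by
  funext i
  rw [windowCharMat_apply, cmvEntry_col_odd α (by grind) (by simp; omega)]
  simp [borderVec, Pi.single_apply, add_comm]

theorem windowCharMat_lastRow (hs : Odd s) :
    windowCharMat α z (s + 1) (Fin.last s) =
      z • Pi.single (Fin.last s) 1 + conj (α (s + 1 : ℕ)) • borderVec α (s + 1) := by
  funext j
  rw [windowCharMat_apply, cmvEntry_row_even α (by grind) (by simp; omega)]
  simp [borderVec, Pi.single_apply, add_comm, eq_comm]

theorem windowCharMat_submatrix_castSucc_succAbove (hs : Even s) :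
    (windowCharMat α z (s + 2)).submatrix Fin.castSucc (Fin.last s).castSucc.succAbove =
      (windowCharMat α z (s + 1)).updateCol (Fin.last s)
        ((rhoC α (s + 1 : ℕ) : ℂ) • borderVec α (s + 1)) := by
  ext i j
  induction j using Fin.lastCases with
  | last =>
    rw [submatrix_apply, Fin.succAbove_castSucc_self, Fin.succ_last, updateCol_self,
      windowCharMat_apply, if_neg (Fin.castSucc_lt_last i).ne,
      cmvEntry_col_even α (by simp; grind) (by simp; omega)]
    simp [borderVec]
  | cast j =>
    rw [submatrix_apply, Fin.succAbove_castSucc_of_lt _ _ (Fin.castSucc_lt_last j),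
      updateCol_ne (Fin.castSucc_lt_last j).ne, windowCharMat_castSucc_castSucc]

theorem windowCharMat_submatrix_succAbove_castSucc (hs : Odd s) :
    (windowCharMat α z (s + 2)).submatrix (Fin.last s).castSucc.succAbove Fin.castSucc =
      (windowCharMat α z (s + 1)).updateRow (Fin.last s)
        ((rhoC α (s + 1 : ℕ) : ℂ) • borderVec α (s + 1)) := by
  ext i j
  induction i using Fin.lastCases with
  | last =>
    rw [submatrix_apply, Fin.succAbove_castSucc_self, Fin.succ_last, updateRow_self,
      windowCharMat_apply, if_neg (Fin.castSucc_lt_last j).ne',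
      cmvEntry_row_odd α (by simp; grind) (by simp; omega)]
    simp [borderVec]
  | cast i =>
    rw [submatrix_apply, Fin.succAbove_castSucc_of_lt _ _ (Fin.castSucc_lt_last i),
      updateRow_ne (Fin.castSucc_lt_last i).ne, windowCharMat_castSucc_castSucc]

/-- The coefficient of `conj α_{s+1}` in `det(z - E_{[1,s+1]})`. -/
def borderDet (s : ℕ) : ℂ :=
  if Even s then ((windowCharMat α z (s + 1)).updateCol (Fin.last s) (borderVec α (s + 1))).det
  else ((windowCharMat α z (s + 1)).updateRow (Fin.last s) (borderVec α (s + 1))).det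

theorem borderDet_zero : borderDet α z 0 = α 0 := by
  rw [borderDet, if_pos Even.zero, det_fin_one, ← Fin.last_zero, updateCol_self]
  exact borderVec_last α

theorem det_windowCharMat_succ :
    (windowCharMat α z (s + 1)).det =
      z * (windowCharMat α z s).det + conj (α (s + 1 : ℕ)) * borderDet α z s := by
  rcases Nat.even_or_odd s with hs | hs
  · rw [borderDet, if_pos hs, det_eq_of_lastCol_eq _ z _ _ (windowCharMat_lastCol α z hs),
      windowCharMat_submatrix_castSucc]
  · rw [borderDet, if_neg (Nat.not_even_iff_odd.2 hs),
      det_eq_of_lastRow_eq _ z _ _ (windowCharMat_lastRow α z hs),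
      windowCharMat_submatrix_castSucc]

theorem borderDet_succ :
    borderDet α z (s + 1) =
      α (s + 1 : ℕ) * (windowCharMat α z (s + 1)).det +
        (rhoC α (s + 1 : ℕ) : ℂ) ^ 2 * borderDet α z s := by
  rcases Nat.even_or_odd s with hs | hs
  · rw [borderDet, borderDet, if_neg (by simpa [Nat.even_add_one] using hs), if_pos hs,
      det_eq_of_lastRow_two_entries _ fun j => by rw [updateRow_self, borderVec_castSucc_castSucc],
      updateRow_self, borderVec_last, borderVec_castSucc_last, ← Fin.succAbove_last,
      submatrix_updateRow_succAbove, submatrix_updateRow_succAbove, Fin.succAbove_last,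
      windowCharMat_submatrix_castSucc, windowCharMat_submatrix_castSucc_succAbove α z hs,
      det_updateCol_smul]
    ring
  · rw [borderDet, borderDet, if_pos (by simpa [Nat.even_add_one] using hs),
      if_neg (Nat.not_even_iff_odd.2 hs),
      det_eq_of_lastCol_two_entries _ fun i => by rw [updateCol_self, borderVec_castSucc_castSucc],
      updateCol_self, updateCol_self, borderVec_last, borderVec_castSucc_last,
      ← Fin.succAbove_last,
      submatrix_updateCol_succAbove, submatrix_updateCol_succAbove, Fin.succAbove_last,
      windowCharMat_submatrix_castSucc, windowCharMat_submatrix_succAbove_castSucc α z hs,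
      det_updateRow_smul]
    ring

theorem borderDet_succ_of_norm_le_one (s : ℕ) (hα : ‖α (s + 1 : ℕ)‖ ≤ 1) :
    borderDet α z (s + 1) =
      borderDet α z s + α (s + 1 : ℕ) * z * (windowCharMat α z s).det := by
  rw [borderDet_succ, det_windowCharMat_succ, rhoC_sq α hα]
  ring

end window

theorem phi_add_psi (α : ℤ → ℂ) (hα : ∀ k, ‖α k‖ < 1)
    (n : ℕ) (hn : 1 ≤ n) (z : ℂ) :
    (monicOPUC (fun k : ℕ => α k) n).eval z +
      (monicOPUC (fun k : ℕ => -α k) n).eval z =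
      2 * z * windowDet α z 1 (n - 1) := by
  obtain ⟨m, rfl⟩ : ∃ m, n = m + 1 := ⟨n - 1, by omega⟩
  rw [Nat.add_sub_cancel, windowDet_one_eq_det]
  exact (eval_monicOPUC_add_neg (fun k : ℕ => α k) z (fun s => (windowCharMat α z s).det)
    (borderDet α z) det_fin_zero (borderDet_zero α z) (fun _ => det_windowCharMat_succ α z)
    (fun s => borderDet_succ_of_norm_le_one α z s (hα _).le) m).1
end
end

section
/- det(z - E_{[0,n-1]}) = (z + conj(α_0) α_{-1}) det(z - E_{[1,n-1]}) - ρ_0 α_{-1} det P_{n-1}, and det(z - C_{[0,n-1]}) = (z - conj(α_0)) det(z - E_{[1,n-1]}) + ρ_0 det P_{n-1}, where P_{n-1} is the common cofactor matrix. -/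
open Polynomial Matrix Complex
open scoped ComplexConjugate

noncomputable section

/-!
Expand `det(z - E_{[0,n]})` along its first column. In the CMV matrix an even row `i` is
supported on the columns `i - 1, …, i + 2` and an odd row on `i - 2, …, i + 1`, so column `0`
has only the entries `E₀₀ = -conj α₀ α₋₁` and `E₁₀ = -ρ₀ α₋₁`. Their minors are
`z - E_{[1,n]}` and `P_n`. The half-line matrix `C` is the extended one with `α₋₁ = -1`, and
this convention changes only column `0`, so the same two minors appear in the second expansion.
-/

theorem Matrix.det_succ_succ_of_column_zero_eq_zero {R : Type*} [CommRing R] {n : ℕ}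
    (A : Matrix (Fin (n + 2)) (Fin (n + 2)) R) (hA : ∀ i : Fin n, A i.succ.succ 0 = 0) :
    A.det = A 0 0 * (A.submatrix Fin.succ Fin.succ).det -
      A 1 0 * (A.submatrix (Fin.succAbove 1) Fin.succ).det := by
  rw [det_succ_column_zero, Fin.sum_univ_succ, Fin.sum_univ_succ]
  simp [hA, Fin.succ_zero_eq_one, sub_eq_add_neg]

section

variable (α : ℤ → ℂ)

lemma windowDet_eq_det (z : ℂ) (a : ℤ) (m : ℕ) :
    windowDet α z a m = (z • (1 : Matrix (Fin m) (Fin m) ℂ) - cmvWindow α a m).det := by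
  rw [windowDet, windowPoly, ← coe_evalRingHom, RingHom.map_det]
  congr 1
  ext i j
  by_cases h : i = j <;> simp [one_apply, h]

lemma cmvEntry_zero_right {i : ℤ} (hi : 2 ≤ i) : cmvEntry α i 0 = 0 := by
  unfold cmvEntry
  split_ifs <;> first | rfl | omega

lemma cmvWindow_submatrix_succ (a : ℤ) (m : ℕ) :
    (cmvWindow α a (m + 1)).submatrix Fin.succ Fin.succ = cmvWindow α (a + 1) m := by
  ext i j
  simp only [cmvWindow, submatrix_apply, of_apply, Fin.val_succ]
  congr 1 <;> push_cast <;> ring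

theorem windowDet_zero_add_two (z : ℂ) (n : ℕ) :
    windowDet α z 0 (n + 2) =
      (z + conj (α 0) * α (-1)) * windowDet α z 1 (n + 1) -
        (rhoC α 0 : ℂ) * α (-1) * (Pmat α z (n + 1)).det := by
  set A := z • (1 : Matrix (Fin (n + 2)) (Fin (n + 2)) ℂ) - cmvWindow α 0 (n + 2)
  have hA : ∀ i : Fin n, A i.succ.succ 0 = 0 := fun i => by
    simp [A, cmvWindow, cmvEntry_zero_right α (i := (i : ℕ) + 1 + 1) (by omega)]
  have hA00 : A 0 0 = z + conj (α 0) * α (-1) := by simp [A, cmvWindow, cmvEntry]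
  have hA10 : A 1 0 = (rhoC α 0 : ℂ) * α (-1) := by simp [A, cmvWindow, cmvEntry]
  have hminor : A.submatrix Fin.succ Fin.succ =
      z • (1 : Matrix (Fin (n + 1)) (Fin (n + 1)) ℂ) - cmvWindow α 1 (n + 1) := by
    rw [← zero_add (1 : ℤ), ← cmvWindow_submatrix_succ]
    ext i j
    simp [A, one_apply]
  rw [windowDet_eq_det, windowDet_eq_det, det_succ_succ_of_column_zero_eq_zero A hA, hA00, hA10,
    hminor, Pmat, Fin.succAbove_zero]

lemma halfAlpha_apply_of_nonneg {n : ℤ} (hn : 0 ≤ n) :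
    halfAlpha (fun k : ℕ => α k) n = α n := by
  simp [halfAlpha, not_lt.2 hn, Int.toNat_of_nonneg hn]

lemma rhoC_halfAlpha_of_nonneg {n : ℤ} (hn : 0 ≤ n) :
    rhoC (halfAlpha fun k : ℕ => α k) n = rhoC α n := by
  rw [rhoC, rhoC, halfAlpha_apply_of_nonneg α hn]

lemma cmvEntry_halfAlpha {i j : ℤ} (hi : 0 ≤ i) (hj : 1 ≤ j) :
    cmvEntry (halfAlpha fun k : ℕ => α k) i j = cmvEntry α i j := by
  unfold cmvEntry
  split_ifs <;> first | rfl | omega |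
    simp (disch := omega) only [halfAlpha_apply_of_nonneg, rhoC_halfAlpha_of_nonneg]

lemma windowDet_halfAlpha_of_one_le (z : ℂ) {a : ℤ} (ha : 1 ≤ a) (m : ℕ) :
    windowDet (halfAlpha fun k : ℕ => α k) z a m = windowDet α z a m := by
  have hwindow : cmvWindow (halfAlpha fun k : ℕ => α k) a m = cmvWindow α a m := by
    ext i j
    exact cmvEntry_halfAlpha α (by omega) (by omega)
  rw [windowDet, windowPoly, hwindow, ← windowPoly, ← windowDet]

lemma Pmat_halfAlpha (z : ℂ) (m : ℕ) :
    Pmat (halfAlpha fun k : ℕ => α k) z m = Pmat α z m := by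
  ext i j
  simp only [Pmat, submatrix_apply, Fin.succAbove_zero, Matrix.sub_apply, cmvWindow, of_apply]
  rw [cmvEntry_halfAlpha α (by positivity) (by simp)]

end

theorem cofactor_expansions_with_Pmat_general (α : ℤ → ℂ)
    (m : ℕ) (hm : 1 ≤ m) (z : ℂ) :
    windowDet α z 0 (m + 1) =
        (z + conj (α 0) * α (-1)) * windowDet α z 1 m -
          (rhoC α 0 : ℂ) * α (-1) * (Pmat α z m).det ∧
      windowDet (halfAlpha fun k : ℕ => α k) z 0 (m + 1) =
        (z - conj (α 0)) * windowDet α z 1 m + (rhoC α 0 : ℂ) * (Pmat α z m).det := by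
  obtain ⟨n, rfl⟩ : ∃ n, m = n + 1 := ⟨m - 1, by omega⟩
  refine ⟨windowDet_zero_add_two α z n, ?_⟩
  have halfAlpha_neg_one : (halfAlpha fun k : ℕ => α k) (-1) = -1 := by simp [halfAlpha]
  rw [windowDet_zero_add_two, halfAlpha_apply_of_nonneg α le_rfl,
    rhoC_halfAlpha_of_nonneg α le_rfl, halfAlpha_neg_one,
    windowDet_halfAlpha_of_one_le α z le_rfl, Pmat_halfAlpha]
  ring

theorem cofactor_expansions_with_Pmat (α : ℤ → ℂ)
    (hα : ∀ k, ‖α k‖ < 1) (m : ℕ) (hm : 1 ≤ m) (z : ℂ) :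
    windowDet α z 0 (m + 1) =
        (z + conj (α 0) * α (-1)) * windowDet α z 1 m -
          (rhoC α 0 : ℂ) * α (-1) * (Pmat α z m).det ∧
      windowDet (halfAlpha fun k : ℕ => α k) z 0 (m + 1) =
        (z - conj (α 0)) * windowDet α z 1 m + (rhoC α 0 : ℂ) * (Pmat α z m).det :=
  cofactor_expansions_with_Pmat_general α m hm z

end
end
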